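/- arXiv:1509.02233 — 2 statements merged into one kernel-verified Lean document; each statement's English description precedes it below -/
import Mathlib

section
/- The map φ from the open set X = {(α, β, γ) ∈ ℝ³ : α, β, γ > 0, α + β + γ = π} to the upper half-plane given by φ(α, β, γ) = (sin β / sin γ) · e^{iα} is a bijection onto ℍ. -/
/-!
By the law of sines, `w = (sin β / sin γ) e^{iα}` is the vertex for which the triangle
`(0, 1, w)` has angles `α, β, γ` at `0, 1, w`; hence `w = (cot α + i) / (cot α + cot β)`, so `w` and the pair `(cot α, cot β)` determine each other:
`cot α = Re w / Im w` and `cot β = (1 - Re w) / Im w`. Since `cot` is a bijection `(0, π) → ℝ`,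
and for `α, β ∈ (0, π)` the condition `α + β < π` is `cot α + cot β > 0`, i.e. `Im w > 0`,
the angles are in turn determined by `w`, and every `w ∈ ℍ` arises.
-/

open Real Set

namespace Real

lemma cot_eq_tan_pi_div_two_sub (x : ℝ) : cot x = tan (π / 2 - x) := by
  rw [cot_eq_cos_div_sin, tan_eq_sin_div_cos, sin_pi_div_two_sub, cos_pi_div_two_sub]

lemma injOn_cot : InjOn cot (Ioo 0 π) := by
  intro x ⟨hx₀, hxπ⟩ y ⟨hy₀, hyπ⟩ hxy
  rw [cot_eq_tan_pi_div_two_sub, cot_eq_tan_pi_div_two_sub] at hxy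
  have := injOn_tan ⟨by linarith, by linarith⟩ ⟨by linarith, by linarith⟩ hxy
  linarith

lemma cot_pi_div_two_sub_arctan (t : ℝ) : cot (π / 2 - arctan t) = t := by
  rw [cot_eq_tan_pi_div_two_sub, sub_sub_cancel, tan_arctan]

lemma cot_add_cot {x y : ℝ} (hx : sin x ≠ 0) (hy : sin y ≠ 0) :
    cot x + cot y = sin (x + y) / (sin x * sin y) := by
  rw [cot_eq_cos_div_sin, cot_eq_cos_div_sin, sin_add]
  field_simp
  ring

lemma add_lt_pi_of_cot_add_cot_pos {x y : ℝ} (hx : x ∈ Ioo 0 π) (hy : y ∈ Ioo 0 π)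
    (h : 0 < cot x + cot y) : x + y < π := by
  have hsx := sin_pos_of_pos_of_lt_pi hx.1 hx.2
  have hsy := sin_pos_of_pos_of_lt_pi hy.1 hy.2
  rw [cot_add_cot hsx.ne' hsy.ne'] at h
  have hsin : 0 < sin (x + y) := (div_pos_iff_of_pos_right (mul_pos hsx hsy)).mp h
  by_contra! hπ
  have : sin (x + y) ≤ 0 := by
    rw [show x + y = x + y - π + π by ring, sin_add_pi]
    exact neg_nonpos.mpr (sin_nonneg_of_nonneg_of_le_pi (by linarith) (by linarith [hx.2, hy.2]))
  linarith

end Real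

def triangleAngles : Set (ℝ × ℝ × ℝ) :=
  {p | 0 < p.1 ∧ 0 < p.2.1 ∧ 0 < p.2.2 ∧ p.1 + p.2.1 + p.2.2 = π}

noncomputable def triangleShape (p : ℝ × ℝ × ℝ) : ℂ :=
  ((sin p.2.1 / sin p.2.2 : ℝ) : ℂ) * Complex.exp (p.1 * Complex.I)

/-- `(cot α, cot β)` for the angles `α, β` at `0` and `1` of the triangle `(0, 1, w)`. -/
noncomputable def cotAngles (w : ℂ) : ℝ × ℝ :=
  (w.re / w.im, (1 - w.re) / w.im)

lemma cotAngles_injOn : InjOn cotAngles {w | 0 < w.im} := by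
  intro w (hw : 0 < w.im) z (hz : 0 < z.im) hwz
  obtain ⟨h₁, h₂⟩ := Prod.ext_iff.mp hwz
  simp only [cotAngles] at h₁ h₂
  have him : w.im = z.im := by
    field_simp at h₁ h₂
    linarith
  rw [him] at h₁
  exact Complex.ext ((div_left_inj' hz.ne').mp h₁) him

section triangleAngles

variable {p : ℝ × ℝ × ℝ}

lemma mem_Ioo_of_mem_triangleAngles (hp : p ∈ triangleAngles) :
    p.1 ∈ Ioo 0 π ∧ p.2.1 ∈ Ioo 0 π ∧ p.2.2 ∈ Ioo 0 π := by
  obtain ⟨h₁, h₂, h₃, hsum⟩ := hp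
  refine ⟨⟨h₁, ?_⟩, ⟨h₂, ?_⟩, ⟨h₃, ?_⟩⟩ <;> linarith

lemma sin_pos_of_mem_triangleAngles (hp : p ∈ triangleAngles) :
    0 < sin p.1 ∧ 0 < sin p.2.1 ∧ 0 < sin p.2.2 := by
  obtain ⟨⟨h₁, h₁'⟩, ⟨h₂, h₂'⟩, ⟨h₃, h₃'⟩⟩ := mem_Ioo_of_mem_triangleAngles hp
  exact ⟨sin_pos_of_pos_of_lt_pi h₁ h₁', sin_pos_of_pos_of_lt_pi h₂ h₂',
    sin_pos_of_pos_of_lt_pi h₃ h₃'⟩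

lemma triangleShape_re : (triangleShape p).re = sin p.2.1 / sin p.2.2 * cos p.1 := by
  rw [triangleShape, Complex.re_ofReal_mul, Complex.exp_ofReal_mul_I_re]

lemma triangleShape_im : (triangleShape p).im = sin p.2.1 / sin p.2.2 * sin p.1 := by
  rw [triangleShape, Complex.im_ofReal_mul, Complex.exp_ofReal_mul_I_im]

lemma triangleShape_im_pos (hp : p ∈ triangleAngles) : 0 < (triangleShape p).im := by
  obtain ⟨h₁, h₂, h₃⟩ := sin_pos_of_mem_triangleAngles hp
  rw [triangleShape_im]
  positivity

lemma cotAngles_triangleShape (hp : p ∈ triangleAngles) :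
    cotAngles (triangleShape p) = (cot p.1, cot p.2.1) := by
  obtain ⟨α, β, γ⟩ := p
  obtain ⟨hα, hβ, hγ⟩ := sin_pos_of_mem_triangleAngles hp
  have hsinγ : sin γ = sin α * cos β + cos α * sin β := by
    rw [show γ = π - (α + β) by linarith [hp.2.2.2], sin_pi_sub, sin_add]
  simp only [cotAngles, triangleShape_re, triangleShape_im, cot_eq_cos_div_sin, Prod.mk.injEq]
  constructor <;> field_simp
  rw [hsinγ]
  ring

lemma eq_of_cot_eq_of_mem_triangleAngles {q : ℝ × ℝ × ℝ} (hp : p ∈ triangleAngles)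
    (hq : q ∈ triangleAngles) (h₁ : cot p.1 = cot q.1) (h₂ : cot p.2.1 = cot q.2.1) : p = q := by
  obtain ⟨hp₁, hp₂, -⟩ := mem_Ioo_of_mem_triangleAngles hp
  obtain ⟨hq₁, hq₂, -⟩ := mem_Ioo_of_mem_triangleAngles hq
  have e₁ := injOn_cot hp₁ hq₁ h₁
  have e₂ := injOn_cot hp₂ hq₂ h₂
  have e₃ : p.2.2 = q.2.2 := by linarith [hp.2.2.2, hq.2.2.2]
  exact Prod.ext e₁ (Prod.ext e₂ e₃)

end triangleAngles

lemma exists_mem_triangleAngles_cot_eq {a b : ℝ} (hab : 0 < a + b) :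
    ∃ p ∈ triangleAngles, cot p.1 = a ∧ cot p.2.1 = b := by
  have arccot_mem (t : ℝ) : π / 2 - arctan t ∈ Ioo 0 π :=
    ⟨by linarith [arctan_lt_pi_div_two t], by linarith [neg_pi_div_two_lt_arctan t]⟩
  set α := π / 2 - arctan a
  set β := π / 2 - arctan b
  have hαβ : α + β < π := by
    refine add_lt_pi_of_cot_add_cot_pos (arccot_mem a) (arccot_mem b) ?_
    rwa [cot_pi_div_two_sub_arctan, cot_pi_div_two_sub_arctan]
  exact ⟨(α, β, π - α - β), ⟨(arccot_mem a).1, (arccot_mem b).1, by linarith, by ring⟩,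
    cot_pi_div_two_sub_arctan a, cot_pi_div_two_sub_arctan b⟩

theorem angle_parametrisation_bijective :
    Set.BijOn
      (fun p : ℝ × ℝ × ℝ =>
        ((Real.sin p.2.1 / Real.sin p.2.2 : ℝ) : ℂ) * Complex.exp (p.1 * Complex.I))
      {p : ℝ × ℝ × ℝ | 0 < p.1 ∧ 0 < p.2.1 ∧ 0 < p.2.2 ∧ p.1 + p.2.1 + p.2.2 = Real.pi}
      {w : ℂ | 0 < w.im} := by
  change BijOn triangleShape triangleAngles {w | 0 < w.im}
  refine ⟨fun p hp ↦ triangleShape_im_pos hp, fun p hp q hq hpq ↦ ?_, fun w hw ↦ ?_⟩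
  · have hcot := congrArg cotAngles hpq
    rw [cotAngles_triangleShape hp, cotAngles_triangleShape hq, Prod.mk.injEq] at hcot
    exact eq_of_cot_eq_of_mem_triangleAngles hp hq hcot.1 hcot.2
  · have hsum : 0 < (cotAngles w).1 + (cotAngles w).2 := by
      have him : 0 < w.im := hw
      simp only [cotAngles, ← add_div, add_sub_cancel]
      positivity
    obtain ⟨p, hp, hα, hβ⟩ := exists_mem_triangleAngles_cot_eq hsum
    refine ⟨p, hp, cotAngles_injOn (triangleShape_im_pos hp) hw ?_⟩
    rw [cotAngles_triangleShape hp, hα, hβ]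
end

section
/- For z in the upper half-plane with z' = 1/(1-z) and z'' = (z-1)/z, and using the principal branch of log on ℂ \ (-∞, 0], one has log(z) + log(z') + log(z'') = π·i. -/
open Complex in
theorem log_shapes_sum_pi (z : ℂ) (hz : 0 < z.im) :
    Complex.log z + Complex.log (1 / (1 - z)) + Complex.log ((z - 1) / z) =
      Real.pi * Complex.I := by
  have hzne : z ≠ 0 := by intro h; simp [h] at hz
  have him1z : (1 - z).im < 0 := by simp [hz]
  have h1zne : (1 - z) ≠ 0 := by intro h; rw [h] at him1z; simp at him1z
  have hz1ne : z - 1 ≠ 0 := by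
    intro h; apply h1zne; rw [← neg_eq_zero]; rw [← h]; ring_nf
  have harg1z : (1 - z).arg ≠ Real.pi := by
    intro h; rw [Complex.arg_eq_pi_iff] at h; exact him1z.ne h.2
  have hargz : z.arg ≠ Real.pi := by
    intro h; rw [Complex.arg_eq_pi_iff] at h; exact hz.ne' h.2
  -- log (1/(1-z)) = - log (1-z)
  have e1 : Complex.log (1 / (1 - z)) = -Complex.log (1 - z) := by
    rw [one_div, Complex.log_inv _ harg1z]
  -- log ((z-1)/z) = log (z-1) - log z
  have hargz1 : 0 < (z - 1).arg := by
    have : 0 ≤ (z - 1).arg := Complex.arg_nonneg_iff.mpr (by simp [hz.le])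
    rcases this.lt_or_eq with h | h
    · exact h
    · exfalso
      have := Complex.arg_eq_zero_iff.mp h.symm
      have : (z - 1).im = 0 := this.2
      simp at this
      exact absurd this hz.ne'
  have hargzinv : z⁻¹.arg < 0 := by
    rw [Complex.arg_neg_iff]
    rw [Complex.inv_im]
    apply div_neg_of_neg_of_pos
    · simpa using hz
    · exact Complex.normSq_pos.mpr hzne
  have e2 : Complex.log ((z - 1) / z) = Complex.log (z - 1) - Complex.log z := by
    rw [div_eq_mul_inv,
      Complex.log_mul hz1ne (inv_ne_zero hzne)
        (Set.mem_Ioc.mpr ⟨by linarith [Complex.neg_pi_lt_arg z⁻¹, hargz1],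
          by linarith [Complex.arg_le_pi (z - 1), hargzinv]⟩),
      Complex.log_inv _ hargz]
    ring
  -- log (z-1) = log (-1) + log (1-z) = π i + log (1-z)
  have e3 : Complex.log (z - 1) = Real.pi * Complex.I + Complex.log (1 - z) := by
    have hrw : z - 1 = (-1) * (1 - z) := by ring
    have h1 : (1 - z).arg < 0 := Complex.arg_neg_iff.mpr him1z
    have h2 := Complex.neg_pi_lt_arg (1 - z)
    rw [hrw,
      Complex.log_mul (by norm_num) h1zne
        (by rw [Complex.arg_neg_one]
            exact Set.mem_Ioc.mpr ⟨by linarith, by linarith [Real.pi_pos]⟩),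
      Complex.log_neg_one]
  rw [e1, e2, e3]
  ring
end
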